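/- arXiv:2512.12269 — 3 statements merged into one kernel-verified Lean document; each statement's English description precedes it below -/
import Mathlib

section
/- On ℝ^{2|2}_{>0} with Q₁ = ∂_{θ¹} + θ²x∂_x, Q₂ = ∂_{θ²} + θ¹y∂_y, the Berezin volume ρ' = e^{θ¹θ² − 2 ln x} ρ (ρ the coordinate volume) is invariant under both supercharges: Div_{ρ'} Q₁ = 0 and Div_{ρ'} Q₂ = 0. Likewise ρ'' = e^{θ²θ¹ − 2 ln y} ρ is invariant under both, so the invariant Berezin volume is not unique. -/
/-! Functions on `ℝ^{2|2}` are modelled as `a₀ + a₁θ¹ + a₂θ² + a₃θ¹θ²` with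
coefficients `aᵢ : ℝ × ℝ → ℝ` in the coordinates `(x, y)`. -/

/-- An element of `C^∞(ℝ²)[θ¹,θ²]`, recorded by its four component functions. -/
structure SFun22 where
  c0 : ℝ × ℝ → ℝ
  c1 : ℝ × ℝ → ℝ
  c2 : ℝ × ℝ → ℝ
  c3 : ℝ × ℝ → ℝ

instance : Zero SFun22 := ⟨⟨0, 0, 0, 0⟩⟩
instance : Add SFun22 := ⟨fun u v => ⟨u.c0 + v.c0, u.c1 + v.c1, u.c2 + v.c2, u.c3 + v.c3⟩⟩

/-- Partial derivative `∂_x`. -/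
noncomputable def pdx (f : ℝ × ℝ → ℝ) : ℝ × ℝ → ℝ :=
  fun p => deriv (fun s => f (s, p.2)) p.1

/-- Partial derivative `∂_y`. -/
noncomputable def pdy (f : ℝ × ℝ → ℝ) : ℝ × ℝ → ℝ :=
  fun p => deriv (fun s => f (p.1, s)) p.2

/-- `Q₁ = ∂_{θ¹} + θ² x ∂_x`. -/
noncomputable def Q1s (a : SFun22) : SFun22 :=
  ⟨a.c1, 0, fun p => a.c3 p + p.1 * pdx a.c0 p, fun p => -(p.1 * pdx a.c1 p)⟩

/-- `Q₂ = ∂_{θ²} + θ¹ y ∂_y`. -/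
noncomputable def Q2s (a : SFun22) : SFun22 :=
  ⟨a.c2, fun p => -a.c3 p + p.2 * pdy a.c0 p, 0, fun p => p.2 * pdy a.c2 p⟩

/-- `P = x∂_x + y∂_y`. -/
noncomputable def Ps (a : SFun22) : SFun22 :=
  ⟨fun p => p.1 * pdx a.c0 p + p.2 * pdy a.c0 p,
   fun p => p.1 * pdx a.c1 p + p.2 * pdy a.c1 p,
   fun p => p.1 * pdx a.c2 p + p.2 * pdy a.c2 p,
   fun p => p.1 * pdx a.c3 p + p.2 * pdy a.c3 p⟩

/-- The positive quadrant `(0,∞)² ⊆ ℝ²`, the body of `ℝ^{2|2}_{>0}`. -/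
def posQ : Set (ℝ × ℝ) := {p | 0 < p.1 ∧ 0 < p.2}

/-- Smoothness of all components on the positive quadrant. -/
def SFun22.SmoothOn (a : SFun22) : Prop :=
  ContDiffOn ℝ (⊤ : ℕ∞) a.c0 posQ ∧ ContDiffOn ℝ (⊤ : ℕ∞) a.c1 posQ ∧
  ContDiffOn ℝ (⊤ : ℕ∞) a.c2 posQ ∧ ContDiffOn ℝ (⊤ : ℕ∞) a.c3 posQ

/-- Equality of superfunctions on the positive quadrant. -/
def SEqOn (u v : SFun22) : Prop :=
  Set.EqOn u.c0 v.c0 posQ ∧ Set.EqOn u.c1 v.c1 posQ ∧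
  Set.EqOn u.c2 v.c2 posQ ∧ Set.EqOn u.c3 v.c3 posQ

/-- An odd vector field `X = f∂_x + g∂_y + h∂_{θ¹} + k∂_{θ²}`. -/
structure OddVF22 where
  fx : SFun22
  fy : SFun22
  h : SFun22
  k : SFun22

/-- Coordinate divergence `Div X = ∂_x f + ∂_y g + ∂_{θ¹} h + ∂_{θ²} k`. -/
noncomputable def DivC (X : OddVF22) : SFun22 :=
  (⟨pdx X.fx.c0, pdx X.fx.c1, pdx X.fx.c2, pdx X.fx.c3⟩ : SFun22) +
  (⟨pdy X.fy.c0, pdy X.fy.c1, pdy X.fy.c2, pdy X.fy.c3⟩ : SFun22) +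
  (⟨X.h.c1, 0, X.h.c3, 0⟩ : SFun22) +
  (⟨X.k.c2, fun p => -X.k.c3 p, 0, 0⟩ : SFun22)

/-- `Q₁ = ∂_{θ¹} + θ²x∂_x` as an odd vector field. -/
noncomputable def Q1vf : OddVF22 :=
  ⟨⟨0, 0, fun p => p.1, 0⟩, 0, ⟨fun _ => 1, 0, 0, 0⟩, 0⟩

/-- `Q₂ = ∂_{θ²} + θ¹y∂_y` as an odd vector field. -/
noncomputable def Q2vf : OddVF22 :=
  ⟨0, ⟨0, fun p => p.2, 0, 0⟩, 0, ⟨fun _ => 1, 0, 0, 0⟩⟩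

/-- The superfunction `θ¹`. -/
noncomputable def th1 : SFun22 := ⟨0, fun _ => 1, 0, 0⟩

/-- The superfunction `θ²`. -/
noncomputable def th2 : SFun22 := ⟨0, 0, fun _ => 1, 0⟩

/-- The even superfunction `θ¹θ² - 2 ln x`. -/
noncomputable def gvol : SFun22 := ⟨fun p => -2 * Real.log p.1, 0, 0, fun _ => 1⟩

/-- The even superfunction `θ²θ¹ - 2 ln y`. -/
noncomputable def gvol' : SFun22 := ⟨fun p => -2 * Real.log p.2, 0, 0, fun _ => -1⟩

/-- on `ℝ^{2|2}_{>0}` with `Q₁ = ∂_{θ¹} + θ²x∂_x`,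
`Q₂ = ∂_{θ²} + θ¹y∂_y`, the Berezin volume `ρ' = e^{θ¹θ² - 2 ln x} ρ` (`ρ` the
coordinate volume, whose divergence is rescaled by adding `Qᵢ(g)`) is invariant under
both supercharges, and likewise `ρ'' = e^{θ²θ¹ - 2 ln y} ρ` is invariant under both;
so the invariant Berezin volume is not unique (`ρ' ≠ ρ''` since the exponents
differ on the quadrant). -/
theorem R22pos_two_invariant_volumes :
    SEqOn (DivC Q1vf + Q1s gvol) 0 ∧ SEqOn (DivC Q2vf + Q2s gvol) 0 ∧
    SEqOn (DivC Q1vf + Q1s gvol') 0 ∧ SEqOn (DivC Q2vf + Q2s gvol') 0 ∧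
    ¬ SEqOn gvol gvol' := by
  have pdx0 : ∀ c : ℝ, pdx (fun _ => c) = fun _ => 0 := by
    intro c; funext p; simp [pdx]
  have pdy0 : ∀ c : ℝ, pdy (fun _ => c) = fun _ => 0 := by
    intro c; funext p; simp [pdy]
  have pdxz : pdx (0 : ℝ × ℝ → ℝ) = fun _ => 0 := pdx0 0
  have pdyz : pdy (0 : ℝ × ℝ → ℝ) = fun _ => 0 := pdy0 0
  have pdx1 : pdx (fun p : ℝ × ℝ => p.1) = fun _ => 1 := by
    funext p; simp [pdx]
  have pdy2 : pdy (fun p : ℝ × ℝ => p.2) = fun _ => 1 := by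
    funext p; simp [pdy]
  have pdxlog : ∀ p : ℝ × ℝ, p ∈ posQ →
      pdx (fun q : ℝ × ℝ => -(2 * Real.log q.1)) p = -2 / p.1 := by
    intro p hp
    have : (fun s : ℝ => -2 * Real.log s) = fun s => (-2 : ℝ) * Real.log s := rfl
    simp only [pdx]
    rw [show (fun s : ℝ => -(2 * Real.log (s, p.2).1)) = fun s : ℝ => (-2) * Real.log s by funext s; ring,
      deriv_const_mul _ (Real.differentiableAt_log (ne_of_gt hp.1)),
      Real.deriv_log]
    field_simp
  have pdylog : ∀ p : ℝ × ℝ, p ∈ posQ →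
      pdy (fun q : ℝ × ℝ => -(2 * Real.log q.2)) p = -2 / p.2 := by
    intro p hp
    simp only [pdy]
    rw [show (fun s : ℝ => -(2 * Real.log (p.1, s).2)) = fun s : ℝ => (-2) * Real.log s by funext s; ring,
      deriv_const_mul _ (Real.differentiableAt_log (ne_of_gt hp.2)),
      Real.deriv_log]
    field_simp
  have pdylogx : pdy (fun q : ℝ × ℝ => -(2 * Real.log q.1)) = fun _ => 0 := by
    funext p; simp [pdy]
  have pdxlogy : pdx (fun q : ℝ × ℝ => -(2 * Real.log q.2)) = fun _ => 0 := by
    funext p; simp [pdx]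
  have ac0 : ∀ u v : SFun22, (u + v).c0 = u.c0 + v.c0 := fun _ _ => rfl
  have ac1 : ∀ u v : SFun22, (u + v).c1 = u.c1 + v.c1 := fun _ _ => rfl
  have ac2 : ∀ u v : SFun22, (u + v).c2 = u.c2 + v.c2 := fun _ _ => rfl
  have ac3 : ∀ u v : SFun22, (u + v).c3 = u.c3 + v.c3 := fun _ _ => rfl
  have zc0 : (0 : SFun22).c0 = 0 := rfl
  have zc1 : (0 : SFun22).c1 = 0 := rfl
  have zc2 : (0 : SFun22).c2 = 0 := rfl
  have zc3 : (0 : SFun22).c3 = 0 := rfl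
  refine ⟨⟨?_, ?_, ?_, ?_⟩, ⟨?_, ?_, ?_, ?_⟩, ⟨?_, ?_, ?_, ?_⟩, ⟨?_, ?_, ?_, ?_⟩, ?_⟩ <;>
    first
    | (intro p hp
       simp only [DivC, Q1vf, Q2vf, Q1s, Q2s, gvol, gvol', ac0, ac1, ac2, ac3,
         zc0, zc1, zc2, zc3, pdxz, pdyz, pdx0, pdy0, pdx1, pdy2, pdylogx, pdxlogy,
         Pi.add_apply, Pi.zero_apply, neg_mul]
       try rw [pdxlog p hp]
       try rw [pdylog p hp]
       have hx := ne_of_gt hp.1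
       have hy := ne_of_gt hp.2
       field_simp
       try ring)
    | (intro h
       have := h.2.2.2 (show ((1 : ℝ), (1 : ℝ)) ∈ posQ from ⟨one_pos, one_pos⟩)
       simp [gvol, gvol'] at this
       linarith)
end

section
/- On ℝ^{2|2} (whole plane, coordinates (x,y,θ¹,θ²)) with Q₁ = ∂_{θ¹} + θ²x∂_x, Q₂ = ∂_{θ²} + θ¹y∂_y and coordinate Berezin volume ρ: Div_ρ Q₁ = θ² = Q₁(θ¹θ² + f(y)) and Div_ρ Q₂ = θ¹ = Q₂(θ²θ¹ + g(x)) for any smooth f, g, so both modular classes vanish; yet for ρ₁ = e^{−(θ¹θ² + f(y))} ρ one computes Div_{ρ₁} Q₁ = 0 and Div_{ρ₁} Q₂ = 2θ¹ − θ¹ y f'(y) = Q₂(ψ) with ψ = 2θ²θ¹ − f(y), but Q₁(ψ) = −2θ² ≠ 0. -/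
lemma SFun22_ext {u v : SFun22} (h0 : u.c0 = v.c0) (h1 : u.c1 = v.c1)
    (h2 : u.c2 = v.c2) (h3 : u.c3 = v.c3) : u = v := by
  cases u; cases v; simp_all

lemma add_c0 (u v : SFun22) : (u + v).c0 = u.c0 + v.c0 := rfl
lemma add_c1 (u v : SFun22) : (u + v).c1 = u.c1 + v.c1 := rfl
lemma add_c2 (u v : SFun22) : (u + v).c2 = u.c2 + v.c2 := rfl
lemma add_c3 (u v : SFun22) : (u + v).c3 = u.c3 + v.c3 := rfl
lemma zero_c0 : (0 : SFun22).c0 = 0 := rfl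
lemma zero_c1 : (0 : SFun22).c1 = 0 := rfl
lemma zero_c2 : (0 : SFun22).c2 = 0 := rfl
lemma zero_c3 : (0 : SFun22).c3 = 0 := rfl

lemma pdx_const (c : ℝ) : pdx (fun _ => c) = 0 := by
  funext p; simp [pdx]

lemma pdy_const (c : ℝ) : pdy (fun _ => c) = 0 := by
  funext p; simp [pdy]

lemma pdx_zero : pdx 0 = 0 := pdx_const 0
lemma pdy_zero : pdy 0 = 0 := pdy_const 0
lemma pdx_zero_apply (p : ℝ × ℝ) : pdx 0 p = 0 := by rw [pdx_zero]; rfl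
lemma pdy_zero_apply (p : ℝ × ℝ) : pdy 0 p = 0 := by rw [pdy_zero]; rfl

lemma pdx_fst : pdx (fun p : ℝ × ℝ => p.1) = fun _ => 1 := by
  funext p; simp [pdx]

lemma pdy_snd : pdy (fun p : ℝ × ℝ => p.2) = fun _ => 1 := by
  funext p; simp [pdy]

lemma pdx_of_snd (f : ℝ → ℝ) : pdx (fun p : ℝ × ℝ => f p.2) = 0 := by
  funext p; simp [pdx]

lemma pdy_of_fst (g : ℝ → ℝ) : pdy (fun p : ℝ × ℝ => g p.1) = 0 := by
  funext p; simp [pdy]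

lemma pdy_of_snd (f : ℝ → ℝ) : pdy (fun p : ℝ × ℝ => f p.2) =
    fun p => deriv f p.2 := by
  funext p; simp [pdy]

lemma pdy_neg_of_snd (f : ℝ → ℝ) : pdy (fun p : ℝ × ℝ => -f p.2) =
    fun p => -deriv f p.2 := by
  funext p
  show deriv (fun s => -f s) p.2 = -deriv f p.2
  exact deriv.neg

lemma pdx_neg_of_snd (f : ℝ → ℝ) : pdx (fun p : ℝ × ℝ => -f p.2) = 0 := by
  funext p; simp [pdx]

/-- on all of `ℝ^{2|2}` with `Q₁ = ∂_{θ¹} + θ²x∂_x`,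
`Q₂ = ∂_{θ²} + θ¹y∂_y` and the coordinate Berezin volume `ρ`:
`Div_ρ Q₁ = θ² = Q₁(θ¹θ² + f(y))` and `Div_ρ Q₂ = θ¹ = Q₂(θ²θ¹ + g(x))` for any
smooth `f, g`, so both modular classes vanish; yet for `ρ₁ = e^{-(θ¹θ² + f(y))} ρ`
one computes `Div_{ρ₁} Q₁ = 0` and `Div_{ρ₁} Q₂ = 2θ¹ - θ¹ y f'(y) = Q₂(ψ)` with
`ψ = 2θ²θ¹ - f(y)`, but `Q₁(ψ) = -2θ² ≠ 0`. -/
theorem R22_obstruction_computation (f g : ℝ → ℝ)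
    (hf : ContDiff ℝ (⊤ : ℕ∞) f) (hg : ContDiff ℝ (⊤ : ℕ∞) g) :
    DivC Q1vf = th2 ∧
    Q1s ⟨fun p => f p.2, 0, 0, fun _ => 1⟩ = th2 ∧
    DivC Q2vf = th1 ∧
    Q2s ⟨fun p => g p.1, 0, 0, fun _ => -1⟩ = th1 ∧
    DivC Q1vf + Q1s ⟨fun p => -f p.2, 0, 0, fun _ => -1⟩ = 0 ∧
    DivC Q2vf + Q2s ⟨fun p => -f p.2, 0, 0, fun _ => -1⟩ =
      ⟨0, fun p => 2 - p.2 * deriv f p.2, 0, 0⟩ ∧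
    DivC Q2vf + Q2s ⟨fun p => -f p.2, 0, 0, fun _ => -1⟩ =
      Q2s ⟨fun p => -f p.2, 0, 0, fun _ => -2⟩ ∧
    Q1s ⟨fun p => -f p.2, 0, 0, fun _ => -2⟩ = ⟨0, 0, fun _ => -2, 0⟩ ∧
    Q1s ⟨fun p => -f p.2, 0, 0, fun _ => -2⟩ ≠ 0 := by
  have hd1 : DivC Q1vf = th2 := by
    refine SFun22_ext ?_ ?_ ?_ ?_ <;> funext p <;>
      simp [DivC, Q1vf, th2, add_c0, add_c1, add_c2, add_c3,
        zero_c0, zero_c1, zero_c2, zero_c3, pdx_zero, pdx_zero_apply, pdy_zero_apply, pdy_zero, pdx_zero_apply, pdy_zero_apply,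
        pdx_const, pdy_const, pdx_fst]
  have hd2 : DivC Q2vf = th1 := by
    refine SFun22_ext ?_ ?_ ?_ ?_ <;> funext p <;>
      simp [DivC, Q2vf, th1, add_c0, add_c1, add_c2, add_c3,
        zero_c0, zero_c1, zero_c2, zero_c3, pdx_zero, pdx_zero_apply, pdy_zero_apply, pdy_zero, pdx_zero_apply, pdy_zero_apply,
        pdx_const, pdy_const, pdy_snd]
  have h5 : DivC Q1vf + Q1s ⟨fun p => -f p.2, 0, 0, fun _ => -1⟩ = 0 := by
    rw [hd1]
    refine SFun22_ext ?_ ?_ ?_ ?_ <;> funext p <;>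
      simp [Q1s, th2, add_c0, add_c1, add_c2, add_c3,
        zero_c0, zero_c1, zero_c2, zero_c3,
        pdx_neg_of_snd, pdx_const, pdx_zero_apply]
  have h6 : DivC Q2vf + Q2s ⟨fun p => -f p.2, 0, 0, fun _ => -1⟩ =
      (⟨0, fun p => 2 - p.2 * deriv f p.2, 0, 0⟩ : SFun22) := by
    rw [hd2]
    refine SFun22_ext ?_ ?_ ?_ ?_ <;> funext p <;>
      simp [Q2s, th1, add_c0, add_c1, add_c2, add_c3,
        zero_c0, zero_c1, zero_c2, zero_c3,
        pdy_neg_of_snd, pdy_zero, pdx_zero_apply, pdy_zero_apply, pdy_const]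
    ring
  have h7 : Q2s ⟨fun p => -f p.2, 0, 0, fun _ => -2⟩ =
      (⟨0, fun p => 2 - p.2 * deriv f p.2, 0, 0⟩ : SFun22) := by
    refine SFun22_ext ?_ ?_ ?_ ?_ <;> funext p <;>
      simp [Q2s, pdy_neg_of_snd, pdy_zero, pdx_zero_apply, pdy_zero_apply, pdy_const, zero_c2]
    ring
  have h8 : Q1s ⟨fun p => -f p.2, 0, 0, fun _ => -2⟩ =
      (⟨0, 0, fun _ => -2, 0⟩ : SFun22) := by
    refine SFun22_ext ?_ ?_ ?_ ?_ <;> funext p <;>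
      simp [Q1s, pdx_neg_of_snd, pdx_zero, pdx_zero_apply, pdy_zero_apply, pdx_const, zero_c1]
  refine ⟨hd1, ?_, hd2, ?_, h5, h6, h6.trans h7.symm, h8, ?_⟩
  · refine SFun22_ext ?_ ?_ ?_ ?_ <;> funext p <;>
      simp [Q1s, th2, pdx_of_snd, pdx_const, pdx_zero_apply, zero_c1]
  · refine SFun22_ext ?_ ?_ ?_ ?_ <;> funext p <;>
      simp [Q2s, th1, pdy_of_fst, pdy_zero, pdx_zero_apply, pdy_zero_apply, pdy_const, zero_c2]
  · rw [h8]
    intro h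
    have := congrFun (congrArg SFun22.c2 h) (0, 0)
    rw [zero_c2] at this
    norm_num at this
end

section
/- On ℝ^{2|2} with Q₁ = ∂_{θ¹} + θ²x∂_x and Q₂ = ∂_{θ²} + θ¹y∂_y (x,y ranging over all of ℝ), there is no Berezin volume ρ' = e^h ρ (h an even element of C^∞(ℝ²)[θ¹,θ²]) with Div_{ρ'} Q₁ = 0 and Div_{ρ'} Q₂ = 0 simultaneously, even though each modular class vanishes individually. -/
/-- on all of `ℝ^{2|2}` with `Q₁ = ∂_{θ¹} + θ²x∂_x` and
`Q₂ = ∂_{θ²} + θ¹y∂_y`, there is no Berezin volume `ρ' = e^h ρ` (`h` an even element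
of `C^∞(ℝ²)[θ¹,θ²]`, i.e. `h = h₀(x,y) + h₃(x,y)θ¹θ²` with smooth components) with
`Div_{ρ'} Q₁ = 0` and `Div_{ρ'} Q₂ = 0` simultaneously, even though each modular
class vanishes individually (`Div_{e^h ρ} Qᵢ = Div_ρ Qᵢ + Qᵢ(h)`). -/
theorem R22_no_simultaneous_invariant_volume :
    ¬ ∃ h : SFun22,
      ContDiff ℝ (⊤ : ℕ∞) h.c0 ∧ ContDiff ℝ (⊤ : ℕ∞) h.c3 ∧ h.c1 = 0 ∧ h.c2 = 0 ∧
      DivC Q1vf + Q1s h = 0 ∧ DivC Q2vf + Q2s h = 0 := by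
  rintro ⟨h, -, -, h1, h2, e1, e2⟩
  have E1 := congrFun (congrArg SFun22.c2 e1) (0, 0)
  have E2 := congrFun (congrArg SFun22.c1 e2) (0, 0)
  have hz0 : (0 : SFun22).c0 = 0 := rfl
  have hz1 : (0 : SFun22).c1 = 0 := rfl
  have hz2 : (0 : SFun22).c2 = 0 := rfl
  have hz3 : (0 : SFun22).c3 = 0 := rfl
  have ha1 : ∀ u v : SFun22, (u + v).c1 = u.c1 + v.c1 := fun _ _ => rfl
  have ha2 : ∀ u v : SFun22, (u + v).c2 = u.c2 + v.c2 := fun _ _ => rfl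
  simp only [DivC, Q1vf, Q2vf, Q1s, Q2s, h1, h2, ha1, ha2, hz0, hz1, hz2, hz3,
    pdx, pdy, Pi.add_apply, Pi.zero_apply] at E1 E2
  norm_num [deriv_const] at E1 E2
  linarith
end
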